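/- Fix n ∈ ℕ. The sequence of functions u ↦ ‖u‖_m := sup{ ‖(φ^v)_m(u)‖_m : (E, v) a proper couple } on M_m(M_n), m ∈ ℕ, is a matrix-norm on M_n: each ‖·‖_m is a norm on M_m(M_n) (in particular ‖u‖_m > 0 for u ≠ 0), and the sequence satisfies Axiom 1 (‖u ⊕ 0‖_{m+k} = ‖u‖_m) and Axiom 2 (‖Su‖_m ≤ ‖S‖_o‖u‖_m and ‖uS‖_m ≤ ‖u‖_m‖S‖_o for scalar matrices S ∈ M_m). -/

import Mathlib

open scoped BigOperators
open Matrix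

noncomputable section

/-- Block-diagonal sum `u ⊕ w` of two square matrices with entries in `E`. -/
def MatDSum {E : Type*} [Zero E] {m k : ℕ}
    (u : Matrix (Fin m) (Fin m) E) (w : Matrix (Fin k) (Fin k) E) :
    Matrix (Fin (m + k)) (Fin (m + k)) E :=
  Matrix.reindex finSumFinEquiv finSumFinEquiv (Matrix.fromBlocks u 0 0 w)

/-- Left action `S·u` of a scalar matrix on an `E`-valued matrix. -/
def scalLeft {E : Type*} [AddCommMonoid E] [Module ℂ E] {m : ℕ}
    (S : Matrix (Fin m) (Fin m) ℂ) (u : Matrix (Fin m) (Fin m) E) :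
    Matrix (Fin m) (Fin m) E :=
  Matrix.of fun i j => ∑ k, S i k • u k j

/-- Right action `u·S` of a scalar matrix on an `E`-valued matrix. -/
def scalRight {E : Type*} [AddCommMonoid E] [Module ℂ E] {m : ℕ}
    (u : Matrix (Fin m) (Fin m) E) (S : Matrix (Fin m) (Fin m) ℂ) :
    Matrix (Fin m) (Fin m) E :=
  Matrix.of fun i j => ∑ k, S k j • u i k

/-- The operator norm `‖S‖_o` of a complex scalar matrix, i.e. its norm as an
operator on the euclidean (Hilbert) space `ℂⁿ`. -/
noncomputable def opNorm {m : ℕ} (S : Matrix (Fin m) (Fin m) ℂ) : ℝ :=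
  ‖LinearMap.toContinuousLinearMap (Matrix.toEuclideanLin S)‖

/-- The `m`-th amplification of a map `φ : E → F`: apply `φ` entrywise. -/
def matAmpl {E F : Type*} (φ : E → F) {m : ℕ} (u : Matrix (Fin m) (Fin m) E) :
    Matrix (Fin m) (Fin m) F :=
  Matrix.of fun i j => φ (u i j)

/-- The operator `φ^v : M_n → E`, `(λ_{ij}) ↦ Σ_{i,j} λ_{ji} • x_{ij}`, associated with
`v = (x_{ij}) ∈ M_n(E)`. -/
def matPhi {E : Type*} [AddCommMonoid E] [Module ℂ E] {n : ℕ}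
    (v : Matrix (Fin n) (Fin n) E) (a : Matrix (Fin n) (Fin n) ℂ) : E :=
  ∑ i, ∑ j, a j i • v i j

/-- `ν` is a matrix-norm on the complex vector space `E`: each `ν m` is a norm on
`M_m(E)`, and Axioms 1 and 2 of Effros/Ruan hold. -/
def IsMatrixNorm {E : Type} [AddCommGroup E] [Module ℂ E]
    (ν : ∀ m : ℕ, Matrix (Fin m) (Fin m) E → ℝ) : Prop :=
  (∀ (m : ℕ) (u v : Matrix (Fin m) (Fin m) E), ν m (u + v) ≤ ν m u + ν m v) ∧
  (∀ (m : ℕ) (c : ℂ) (u : Matrix (Fin m) (Fin m) E), ν m (c • u) = ‖c‖ * ν m u) ∧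
  (∀ (m : ℕ) (u : Matrix (Fin m) (Fin m) E), ν m u = 0 ↔ u = 0) ∧
  (∀ (m k : ℕ) (u : Matrix (Fin m) (Fin m) E),
      ν (m + k) (MatDSum u (0 : Matrix (Fin k) (Fin k) E)) = ν m u) ∧
  (∀ (m : ℕ) (S : Matrix (Fin m) (Fin m) ℂ) (u : Matrix (Fin m) (Fin m) E),
      ν m (scalLeft S u) ≤ opNorm S * ν m u) ∧
  (∀ (m : ℕ) (u : Matrix (Fin m) (Fin m) E) (S : Matrix (Fin m) (Fin m) ℂ),
      ν m (scalRight u S) ≤ ν m u * opNorm S)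

/-- The set of values `‖(φ^v)_m(u)‖_m` over all proper couples `(E, v)`, i.e. over all
matricially normed spaces `E` and all `v` in the closed unit ball of `M_n(E)`. -/
def hatNormSet (n : ℕ) {m : ℕ}
    (u : Matrix (Fin m) (Fin m) (Matrix (Fin n) (Fin n) ℂ)) : Set ℝ :=
  { r | ∃ (E : Type) (_ : AddCommGroup E) (_ : Module ℂ E)
        (ν : ∀ m' : ℕ, Matrix (Fin m') (Fin m') E → ℝ),
        IsMatrixNorm ν ∧
        ∃ v : Matrix (Fin n) (Fin n) E, ν n v ≤ 1 ∧ r = ν m (matAmpl (matPhi v) u) }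

/-- The matrix-norm of the matricially normed space `M̂_n`:
`‖u‖_m = sup { ‖(φ^v)_m(u)‖_m : (E, v) a proper couple }`. -/
noncomputable def hatNorm (n : ℕ) {m : ℕ}
    (u : Matrix (Fin m) (Fin m) (Matrix (Fin n) (Fin n) ℂ)) : ℝ :=
  sSup (hatNormSet n u)

/-! The supremum is finite because, for a matrix norm `ν` and `ν n v ≤ 1`, the entries `x_{ij}`
of `v` and their placements `E_{kl} ⊗ x_{ij}` all have norm at most `1` (compress by matrix units of
operator norm `1`, and move between sizes with Axiom 1), so `‖(φ^v)_m(u)‖_m ≤ Σ |u_{kl,ji}|`.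
Each axiom for `‖·‖_m` holds couple by couple, because `(φ^v)_m` is linear and commutes with scalar
matrices and with `· ⊕ 0`, and so passes to the supremum. Definiteness comes from one couple:
`ℂ` with the Frobenius norms, which is matricially normed since `‖S u‖_F ≤ ‖S‖_o ‖u‖_F`, and
`v = E_{ba}`, for which `(φ^v)_m(u)` is the matrix of `(a, b)` entries of the blocks of `u`. -/

lemma opNorm_nonneg {m : ℕ} (S : Matrix (Fin m) (Fin m) ℂ) : 0 ≤ opNorm S := norm_nonneg _

section L2OpNorm
open scoped Matrix.Norms.L2Operator

lemma opNorm_mulVec_le {m : ℕ} (S : Matrix (Fin m) (Fin m) ℂ) (x : Fin m → ℂ) :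
    ‖WithLp.toLp 2 (S *ᵥ x)‖ ≤ opNorm S * ‖WithLp.toLp 2 x‖ :=
  l2_opNorm_mulVec S (WithLp.toLp 2 x)

lemma opNorm_conjTranspose {m : ℕ} (S : Matrix (Fin m) (Fin m) ℂ) : opNorm Sᴴ = opNorm S :=
  l2_opNorm_conjTranspose S

lemma opNorm_single_one {m : ℕ} (i j : Fin m) : opNorm (single i j (1 : ℂ)) = 1 := by
  have h : ‖(single i j (1 : ℂ))ᴴ * single i j 1‖ = 1 := by
    simp [conjTranspose_single, single_mul_single_same, ← diagonal_single, Pi.norm_single]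
  rw [l2_opNorm_conjTranspose_mul_self, ← sq] at h
  exact (pow_eq_one_iff_of_nonneg (norm_nonneg _) two_ne_zero).mp h

end L2OpNorm

lemma scalLeft_eq_mul {m : ℕ} (S u : Matrix (Fin m) (Fin m) ℂ) : scalLeft S u = S * u := by
  ext i j
  simp [scalLeft, mul_apply]

lemma scalRight_eq_mul {m : ℕ} (u S : Matrix (Fin m) (Fin m) ℂ) : scalRight u S = u * S := by
  ext i j
  simp [scalRight, mul_apply, mul_comm]

lemma single_entry_eq_scalLeft_scalRight {E : Type*} [AddCommMonoid E] [Module ℂ E] {m : ℕ}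
    (w : Matrix (Fin m) (Fin m) E) (i j k l : Fin m) :
    single k l (w i j) = scalLeft (single k i 1) (scalRight w (single j l 1)) := by
  ext p q
  simp [scalLeft, scalRight, single_apply, ite_smul, ite_and]
  split_ifs <;> rfl

lemma matDSum_zero_eq_single {E : Type*} [Zero E] {m : ℕ} (x : E) :
    MatDSum !![x] (0 : Matrix (Fin m) (Fin m) E) =
      single (Fin.castAdd m 0) (Fin.castAdd m 0) x := by
  ext p q
  obtain ⟨s, rfl⟩ := finSumFinEquiv.surjective p
  obtain ⟨t, rfl⟩ := finSumFinEquiv.surjective q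
  rcases s with s | s <;> rcases t with t | t <;>
    simp [MatDSum, single_apply, Fin.fin_one_eq_zero, Fin.ext_iff] <;> omega

section Amplification
variable {E F : Type*} [AddCommMonoid E] [Module ℂ E] [AddCommMonoid F] [Module ℂ F]
  (f : E →ₗ[ℂ] F) {m : ℕ}

lemma matAmpl_add (u w : Matrix (Fin m) (Fin m) E) :
    matAmpl f (u + w) = matAmpl f u + matAmpl f w :=
  Matrix.map_add f (map_add f) u w

lemma matAmpl_smul (c : ℂ) (u : Matrix (Fin m) (Fin m) E) :
    matAmpl f (c • u) = c • matAmpl f u :=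
  Matrix.map_smul f c (map_smul f c) u

lemma matAmpl_scalLeft (S : Matrix (Fin m) (Fin m) ℂ) (u : Matrix (Fin m) (Fin m) E) :
    matAmpl f (scalLeft S u) = scalLeft S (matAmpl f u) := by
  ext p q
  simp [matAmpl, scalLeft]

lemma matAmpl_scalRight (u : Matrix (Fin m) (Fin m) E) (S : Matrix (Fin m) (Fin m) ℂ) :
    matAmpl f (scalRight u S) = scalRight (matAmpl f u) S := by
  ext p q
  simp [matAmpl, scalRight]

lemma matAmpl_matDSum_zero {k : ℕ} (u : Matrix (Fin m) (Fin m) E) :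
    matAmpl f (MatDSum u (0 : Matrix (Fin k) (Fin k) E)) = MatDSum (matAmpl f u) 0 := by
  ext p q
  simp only [matAmpl, MatDSum, reindex_apply, submatrix_apply, of_apply]
  rcases finSumFinEquiv.symm p with a | a <;> rcases finSumFinEquiv.symm q with b | b <;> simp

end Amplification

section MatPhi
variable {E : Type*} [AddCommMonoid E] [Module ℂ E] {n : ℕ}

def matPhiₗ (v : Matrix (Fin n) (Fin n) E) : Matrix (Fin n) (Fin n) ℂ →ₗ[ℂ] E where
  toFun := matPhi v
  map_add' a b := by simp [matPhi, add_smul, Finset.sum_add_distrib]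
  map_smul' c a := by simp [matPhi, mul_smul, Finset.smul_sum]

lemma coe_matPhiₗ (v : Matrix (Fin n) (Fin n) E) : ⇑(matPhiₗ v) = matPhi v := rfl

lemma matPhi_single (i j : Fin n) (x : E) (a : Matrix (Fin n) (Fin n) ℂ) :
    matPhi (single i j x) a = a j i • x := by
  simp [matPhi, single_apply, ite_and]

lemma matAmpl_matPhi_eq_sum {m : ℕ} (v : Matrix (Fin n) (Fin n) E)
    (u : Matrix (Fin m) (Fin m) (Matrix (Fin n) (Fin n) ℂ)) :
    matAmpl (matPhi v) u = ∑ k, ∑ l, ∑ i, ∑ j, u k l j i • single k l (v i j) := by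
  conv_lhs => rw [matrix_eq_sum_single (matAmpl (matPhi v) u)]
  simp only [matAmpl, of_apply, matPhi, ← singleAddMonoidHom_apply, map_sum]
  simp [smul_single]

end MatPhi

namespace IsMatrixNorm

variable {E : Type} [AddCommGroup E] [Module ℂ E] {ν : ∀ m : ℕ, Matrix (Fin m) (Fin m) E → ℝ}
  (hν : IsMatrixNorm ν)
include hν

lemma add_le {m : ℕ} (u w : Matrix (Fin m) (Fin m) E) : ν m (u + w) ≤ ν m u + ν m w :=
  hν.1 m u w

lemma smul {m : ℕ} (c : ℂ) (u : Matrix (Fin m) (Fin m) E) : ν m (c • u) = ‖c‖ * ν m u :=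
  hν.2.1 m c u

lemma eq_zero_iff {m : ℕ} {u : Matrix (Fin m) (Fin m) E} : ν m u = 0 ↔ u = 0 :=
  hν.2.2.1 m u

lemma matDSum_zero {m k : ℕ} (u : Matrix (Fin m) (Fin m) E) :
    ν (m + k) (MatDSum u (0 : Matrix (Fin k) (Fin k) E)) = ν m u :=
  hν.2.2.2.1 m k u

lemma scalLeft_le {m : ℕ} (S : Matrix (Fin m) (Fin m) ℂ) (u : Matrix (Fin m) (Fin m) E) :
    ν m (scalLeft S u) ≤ opNorm S * ν m u :=
  hν.2.2.2.2.1 m S u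

lemma scalRight_le {m : ℕ} (u : Matrix (Fin m) (Fin m) E) (S : Matrix (Fin m) (Fin m) ℂ) :
    ν m (scalRight u S) ≤ ν m u * opNorm S :=
  hν.2.2.2.2.2 m u S

lemma map_zero (m : ℕ) : ν m 0 = 0 := hν.eq_zero_iff.2 rfl

lemma sum_le {ι : Type*} {m : ℕ} (s : Finset ι) (f : ι → Matrix (Fin m) (Fin m) E) :
    ν m (∑ i ∈ s, f i) ≤ ∑ i ∈ s, ν m (f i) :=
  Finset.le_sum_of_subadditive (ν m) (hν.map_zero m).le hν.add_le s f

lemma single_entry_le {m : ℕ} (w : Matrix (Fin m) (Fin m) E) (i j k l : Fin m) :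
    ν m (single k l (w i j)) ≤ ν m w := by
  rw [single_entry_eq_scalLeft_scalRight]
  calc _ ≤ opNorm (single k i (1 : ℂ)) * ν m (scalRight w (single j l 1)) := hν.scalLeft_le _ _
    _ = ν m (scalRight w (single j l 1)) := by rw [opNorm_single_one, one_mul]
    _ ≤ ν m w * opNorm (single j l (1 : ℂ)) := hν.scalRight_le _ _
    _ = ν m w := by rw [opNorm_single_one, mul_one]

lemma single_corner {m : ℕ} (x : E) :
    ν (1 + m) (single (Fin.castAdd m 0) (Fin.castAdd m 0) x) = ν 1 !![x] := by
  rw [← matDSum_zero_eq_single, hν.matDSum_zero]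

lemma single_le_one_by_one {m : ℕ} (k l : Fin m) (x : E) : ν m (single k l x) ≤ ν 1 !![x] := by
  obtain ⟨m, rfl⟩ : ∃ m', m = 1 + m' := ⟨m - 1, by have := k.pos; omega⟩
  have h := hν.single_entry_le (single (Fin.castAdd m 0) (Fin.castAdd m 0) x)
    (Fin.castAdd m 0) (Fin.castAdd m 0) k l
  rwa [single_apply_same, hν.single_corner] at h

lemma one_by_one_le {p : ℕ} (w : Matrix (Fin p) (Fin p) E) (i j : Fin p) :
    ν 1 !![w i j] ≤ ν p w := by
  obtain ⟨p, rfl⟩ : ∃ p', p = 1 + p' := ⟨p - 1, by have := i.pos; omega⟩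
  rw [← hν.single_corner]
  exact hν.single_entry_le w i j _ _

lemma matAmpl_matPhi_le {n m : ℕ} {v : Matrix (Fin n) (Fin n) E} (hv : ν n v ≤ 1)
    (u : Matrix (Fin m) (Fin m) (Matrix (Fin n) (Fin n) ℂ)) :
    ν m (matAmpl (matPhi v) u) ≤ ∑ k, ∑ l, ∑ i, ∑ j, ‖u k l j i‖ := by
  rw [matAmpl_matPhi_eq_sum]
  refine (hν.sum_le _ _).trans (Finset.sum_le_sum fun k _ => ?_)
  refine (hν.sum_le _ _).trans (Finset.sum_le_sum fun l _ => ?_)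
  refine (hν.sum_le _ _).trans (Finset.sum_le_sum fun i _ => ?_)
  refine (hν.sum_le _ _).trans (Finset.sum_le_sum fun j _ => ?_)
  rw [hν.smul]
  exact mul_le_of_le_one_right (norm_nonneg _)
    ((hν.single_le_one_by_one k l _).trans ((hν.one_by_one_le v i j).trans hv))

end IsMatrixNorm

section Frobenius
attribute [local instance] Matrix.frobeniusNormedAddCommGroup Matrix.frobeniusNormSMulClass

lemma frobenius_norm_sq {m n : Type*} [Fintype m] [Fintype n] (A : Matrix m n ℂ) :
    ‖A‖ ^ 2 = ∑ i, ∑ j, ‖A i j‖ ^ 2 := by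
  change ‖WithLp.toLp 2 fun i => WithLp.toLp 2 (A i)‖ ^ 2 = _
  simp [PiLp.norm_sq_eq_of_L2]

lemma frobenius_norm_single_one {m : ℕ} (i j : Fin m) : ‖single i j (1 : ℂ)‖ = 1 := by
  rw [← sq_eq_sq₀ (norm_nonneg _) zero_le_one, frobenius_norm_sq]
  simp [single_apply, ite_and, apply_ite (fun x : ℂ => ‖x‖ ^ 2)]

lemma frobenius_norm_matDSum_zero {m k : ℕ} (u : Matrix (Fin m) (Fin m) ℂ) :
    ‖MatDSum u (0 : Matrix (Fin k) (Fin k) ℂ)‖ = ‖u‖ := by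
  rw [← sq_eq_sq₀ (norm_nonneg _) (norm_nonneg _), frobenius_norm_sq, frobenius_norm_sq,
    ← finSumFinEquiv.sum_comp]
  simp [MatDSum, ← finSumFinEquiv.sum_comp, Fintype.sum_sum_type]

/-- Column by column, this is `‖S x‖ ≤ ‖S‖_o ‖x‖`. -/
lemma frobenius_norm_mul_le_opNorm_mul {m : ℕ} (S u : Matrix (Fin m) (Fin m) ℂ) :
    ‖S * u‖ ≤ opNorm S * ‖u‖ := by
  have := opNorm_nonneg S
  rw [← sq_le_sq₀ (norm_nonneg _) (by positivity), mul_pow, frobenius_norm_sq, frobenius_norm_sq,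
    Finset.sum_comm, Finset.sum_comm (f := fun i j => ‖u i j‖ ^ 2), Finset.mul_sum]
  gcongr with j
  have h := opNorm_mulVec_le S fun i => u i j
  rwa [← sq_le_sq₀ (norm_nonneg _) (by positivity), mul_pow, EuclideanSpace.norm_sq_eq,
    EuclideanSpace.norm_sq_eq] at h

lemma frobenius_norm_mul_le_mul_opNorm {m : ℕ} (u S : Matrix (Fin m) (Fin m) ℂ) :
    ‖u * S‖ ≤ ‖u‖ * opNorm S := by
  rw [← frobenius_norm_conjTranspose, conjTranspose_mul, mul_comm, ← opNorm_conjTranspose,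
    ← frobenius_norm_conjTranspose u]
  exact frobenius_norm_mul_le_opNorm_mul _ _

lemma isMatrixNorm_frobenius : IsMatrixNorm fun m (u : Matrix (Fin m) (Fin m) ℂ) => ‖u‖ :=
  ⟨fun _ => norm_add_le, fun _ => norm_smul, fun _ _ => norm_eq_zero,
    fun _ _ => frobenius_norm_matDSum_zero,
    fun _ S u => scalLeft_eq_mul S u ▸ frobenius_norm_mul_le_opNorm_mul S u,
    fun _ u S => scalRight_eq_mul u S ▸ frobenius_norm_mul_le_mul_opNorm u S⟩

end Frobenius

section HatNorm
variable {n m : ℕ}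

lemma zero_mem_hatNormSet (u : Matrix (Fin m) (Fin m) (Matrix (Fin n) (Fin n) ℂ)) :
    0 ∈ hatNormSet n u := by
  have hφ : matAmpl (matPhi (0 : Matrix (Fin n) (Fin n) ℂ)) u = 0 := by
    ext
    simp [matAmpl, matPhi]
  exact ⟨ℂ, _, _, _, isMatrixNorm_frobenius, 0,
    (isMatrixNorm_frobenius.map_zero n).trans_le zero_le_one,
    by rw [hφ, isMatrixNorm_frobenius.map_zero]⟩

lemma hatNormSet_bddAbove (u : Matrix (Fin m) (Fin m) (Matrix (Fin n) (Fin n) ℂ)) :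
    BddAbove (hatNormSet n u) :=
  ⟨_, fun _ ⟨_, _, _, _, hν, _, hv, hr⟩ => hr ▸ hν.matAmpl_matPhi_le hv u⟩

lemma le_hatNorm {E : Type} [AddCommGroup E] [Module ℂ E]
    {ν : ∀ m : ℕ, Matrix (Fin m) (Fin m) E → ℝ} (hν : IsMatrixNorm ν)
    {v : Matrix (Fin n) (Fin n) E} (hv : ν n v ≤ 1)
    (u : Matrix (Fin m) (Fin m) (Matrix (Fin n) (Fin n) ℂ)) :
    ν m (matAmpl (matPhi v) u) ≤ hatNorm n u :=
  le_csSup (hatNormSet_bddAbove u) ⟨E, _, _, ν, hν, v, hv, rfl⟩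

lemma hatNorm_le {u : Matrix (Fin m) (Fin m) (Matrix (Fin n) (Fin n) ℂ)} {c : ℝ}
    (h : ∀ (E : Type) [AddCommGroup E] [Module ℂ E] (ν : ∀ m : ℕ, Matrix (Fin m) (Fin m) E → ℝ),
      IsMatrixNorm ν → ∀ v : Matrix (Fin n) (Fin n) E, ν n v ≤ 1 →
        ν m (matAmpl (matPhi v) u) ≤ c) :
    hatNorm n u ≤ c :=
  csSup_le ⟨0, zero_mem_hatNormSet u⟩ fun _ ⟨E, _, _, ν, hν, v, hv, hr⟩ => hr ▸ h E ν hν v hv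

lemma hatNorm_add_le (u w : Matrix (Fin m) (Fin m) (Matrix (Fin n) (Fin n) ℂ)) :
    hatNorm n (u + w) ≤ hatNorm n u + hatNorm n w :=
  hatNorm_le fun _ _ _ _ hν v hv => by
    rw [← coe_matPhiₗ, matAmpl_add]
    exact (hν.add_le _ _).trans (add_le_add (le_hatNorm hν hv u) (le_hatNorm hν hv w))

lemma hatNorm_smul_le (c : ℂ) (u : Matrix (Fin m) (Fin m) (Matrix (Fin n) (Fin n) ℂ)) :
    hatNorm n (c • u) ≤ ‖c‖ * hatNorm n u :=
  hatNorm_le fun _ _ _ _ hν v hv => by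
    rw [← coe_matPhiₗ, matAmpl_smul, hν.smul]
    exact mul_le_mul_of_nonneg_left (le_hatNorm hν hv u) (norm_nonneg c)

lemma hatNorm_nonneg (u : Matrix (Fin m) (Fin m) (Matrix (Fin n) (Fin n) ℂ)) :
    0 ≤ hatNorm n u :=
  le_csSup (hatNormSet_bddAbove u) (zero_mem_hatNormSet u)

lemma hatNorm_zero : hatNorm n (0 : Matrix (Fin m) (Fin m) (Matrix (Fin n) (Fin n) ℂ)) = 0 := by
  refine le_antisymm ?_ (hatNorm_nonneg 0)
  simpa using hatNorm_smul_le 0 (0 : Matrix (Fin m) (Fin m) (Matrix (Fin n) (Fin n) ℂ))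

lemma hatNorm_smul (c : ℂ) (u : Matrix (Fin m) (Fin m) (Matrix (Fin n) (Fin n) ℂ)) :
    hatNorm n (c • u) = ‖c‖ * hatNorm n u := by
  rcases eq_or_ne c 0 with rfl | hc
  · simp [hatNorm_zero]
  refine le_antisymm (hatNorm_smul_le c u) ?_
  calc ‖c‖ * hatNorm n u = ‖c‖ * hatNorm n (c⁻¹ • c • u) := by rw [inv_smul_smul₀ hc]
    _ ≤ ‖c‖ * (‖c⁻¹‖ * hatNorm n (c • u)) := by gcongr; exact hatNorm_smul_le _ _
    _ = hatNorm n (c • u) := by rw [norm_inv, mul_inv_cancel_left₀ (norm_ne_zero_iff.2 hc)]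

lemma hatNorm_matDSum_zero {k : ℕ} (u : Matrix (Fin m) (Fin m) (Matrix (Fin n) (Fin n) ℂ)) :
    hatNorm n (MatDSum u (0 : Matrix (Fin k) (Fin k) (Matrix (Fin n) (Fin n) ℂ))) =
      hatNorm n u := by
  refine le_antisymm (hatNorm_le fun _ _ _ _ hν v hv => ?_) (hatNorm_le fun _ _ _ _ hν v hv => ?_)
  · rw [← coe_matPhiₗ, matAmpl_matDSum_zero, hν.matDSum_zero]
    exact le_hatNorm hν hv u
  · rw [← hν.matDSum_zero (k := k), ← coe_matPhiₗ, ← matAmpl_matDSum_zero]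
    exact le_hatNorm hν hv _

lemma hatNorm_scalLeft_le (S : Matrix (Fin m) (Fin m) ℂ)
    (u : Matrix (Fin m) (Fin m) (Matrix (Fin n) (Fin n) ℂ)) :
    hatNorm n (scalLeft S u) ≤ opNorm S * hatNorm n u :=
  hatNorm_le fun _ _ _ _ hν v hv => by
    rw [← coe_matPhiₗ, matAmpl_scalLeft]
    exact (hν.scalLeft_le _ _).trans
      (mul_le_mul_of_nonneg_left (le_hatNorm hν hv u) (opNorm_nonneg S))

lemma hatNorm_scalRight_le (u : Matrix (Fin m) (Fin m) (Matrix (Fin n) (Fin n) ℂ))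
    (S : Matrix (Fin m) (Fin m) ℂ) :
    hatNorm n (scalRight u S) ≤ hatNorm n u * opNorm S :=
  hatNorm_le fun _ _ _ _ hν v hv => by
    rw [← coe_matPhiₗ, matAmpl_scalRight]
    exact (hν.scalRight_le _ _).trans
      (mul_le_mul_of_nonneg_right (le_hatNorm hν hv u) (opNorm_nonneg S))

attribute [local instance] Matrix.frobeniusNormedAddCommGroup in
lemma hatNorm_pos {u : Matrix (Fin m) (Fin m) (Matrix (Fin n) (Fin n) ℂ)} (hu : u ≠ 0) :
    0 < hatNorm n u := by
  obtain ⟨k, l, a, b, hab⟩ : ∃ k l a b, u k l a b ≠ 0 := by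
    by_contra! h
    exact hu (ext fun k l => ext (h k l))
  have hne : matAmpl (matPhi (single b a (1 : ℂ))) u ≠ 0 := fun h => hab <| by
    simpa [matAmpl, matPhi_single] using congrFun (congrFun h k) l
  exact (norm_pos_iff.2 hne).trans_le
    (le_hatNorm isMatrixNorm_frobenius (frobenius_norm_single_one b a).le u)

lemma hatNorm_eq_zero_iff {u : Matrix (Fin m) (Fin m) (Matrix (Fin n) (Fin n) ℂ)} :
    hatNorm n u = 0 ↔ u = 0 :=
  ⟨fun h => by_contra fun hu => (hatNorm_pos hu).ne' h, fun h => h ▸ hatNorm_zero⟩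

end HatNorm

theorem hatNorm_isMatrixNorm_general (n : ℕ) :
    IsMatrixNorm (fun m (u : Matrix (Fin m) (Fin m) (Matrix (Fin n) (Fin n) ℂ)) =>
      hatNorm n u) ∧
    ∀ (m : ℕ) (u : Matrix (Fin m) (Fin m) (Matrix (Fin n) (Fin n) ℂ)),
      u ≠ 0 → 0 < hatNorm n u :=
  ⟨⟨fun _ => hatNorm_add_le, fun _ => hatNorm_smul, fun _ _ => hatNorm_eq_zero_iff,
      fun _ _ => hatNorm_matDSum_zero, fun _ => hatNorm_scalLeft_le,
      fun _ => hatNorm_scalRight_le⟩,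
    fun _ _ => hatNorm_pos⟩

/-- **Theorem 1.** The sequence of functions `u ↦ ‖u‖_m = sup{‖(φ^v)_m(u)‖}` (supremum
over proper couples) is a matrix-norm on `M_n`: each `‖·‖_m` is a norm on `M_m(M_n)`
(in particular `‖u‖_m > 0` for `u ≠ 0`), and Axioms 1 and 2 hold. -/
theorem hatNorm_isMatrixNorm (n : ℕ) (hn : 0 < n) :
    IsMatrixNorm (fun m (u : Matrix (Fin m) (Fin m) (Matrix (Fin n) (Fin n) ℂ)) =>
      hatNorm n u) ∧
    ∀ (m : ℕ) (u : Matrix (Fin m) (Fin m) (Matrix (Fin n) (Fin n) ℂ)),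
      u ≠ 0 → 0 < hatNorm n u :=
  hatNorm_isMatrixNorm_general n
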